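/- If G is an n-vertex graph with cop number k, then the capture time of G satisfies capt(G) ≤ n · C(n+k-1, k). -/

import Mathlib

/-!
Let `W t` be the set of configurations (cops to move) from which the cops can force capture
within `t` moves. Then `W (t + 1) = step (W t)` for a monotone operator `step`, so the `W t`
increase; since membership only depends on the multiset of cop positions and the robber's vertex,
the chain stabilises after at most `n · C(n+k-1, k)` steps at a set `W` with `step W ⊆ W`.
A robber who keeps the configuration outside `W` is never caught, so any winning cop strategy
starts where every robber position is either caught at once or in `W`; from there, cops who make
the least index `t` with the configuration in `step (W t)` drop by one each round capture the
robber within `n · C(n+k-1, k)` rounds.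
-/

namespace CR

/-- A (positional) strategy for `k` cops: initial positions, and a move
function depending on the current configuration (cop positions, robber position). -/
structure CopStrat (V : Type) (k : ℕ) where
  init : Fin k → V
  move : (Fin k → V) → V → Fin k → V

/-- A (positional) strategy for the robber: an initial position chosen after seeing
the cops' initial positions, and a move function of the current configuration. -/
structure RobStrat (V : Type) (k : ℕ) where
  init : (Fin k → V) → V
  move : (Fin k → V) → V → V

variable {V : Type} {k : ℕ}

/-- The configuration (cop positions, robber position) at the end of round `t`. -/
def play (cs : CopStrat V k) (rs : RobStrat V k) : ℕ → (Fin k → V) × V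
  | 0 => (cs.init, rs.init cs.init)
  | t + 1 =>
      let c := cs.move (play cs rs t).1 (play cs rs t).2
      (c, rs.move c (play cs rs t).2)

/-- A cop strategy is valid if every cop always moves along the move relation `adj`. -/
def CopStrat.Valid (adj : V → V → Prop) (cs : CopStrat V k) : Prop :=
  ∀ c r i, adj (c i) (cs.move c r i)

/-- A robber strategy is valid if the robber always moves along the move relation `adj`. -/
def RobStrat.Valid (adj : V → V → Prop) (rs : RobStrat V k) : Prop :=
  ∀ c r, adj r (rs.move c r)

/-- The robber is caught at stage `s`: some cop occupies the robber's vertex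
(at stage `s ≥ 1`, checked just after the cops' move in round `s`). -/
def caughtAt (cs : CopStrat V k) (rs : RobStrat V k) : ℕ → Prop
  | 0 => ∃ i, cs.init i = rs.init cs.init
  | t + 1 => ∃ i, cs.move (play cs rs t).1 (play cs rs t).2 i = (play cs rs t).2

/-- `k` cops can guarantee capture within `t` rounds on the graph with move relation `adj`. -/
def CopsWinIn (adj : V → V → Prop) (k t : ℕ) : Prop :=
  ∃ cs : CopStrat V k, cs.Valid adj ∧
    ∀ rs : RobStrat V k, rs.Valid adj → ∃ s, s ≤ t ∧ caughtAt cs rs s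

/-- The cop number: least `k` such that `k` cops can guarantee capture. -/
noncomputable def copNumber (adj : V → V → Prop) : ℕ :=
  sInf {k | ∃ t, CopsWinIn adj k t}

/-- The capture time: least `t` such that `copNumber` cops capture within `t` rounds. -/
noncomputable def captTime (adj : V → V → Prop) : ℕ :=
  sInf {t | CopsWinIn adj (copNumber adj) t}

end CR

open CR

theorem exists_perm_comp_eq_of_ofFn_perm {α : Type*} {n : ℕ} {f g : Fin n → α}
    (h : (List.ofFn f).Perm (List.ofFn g)) : ∃ σ : Equiv.Perm (Fin n), f ∘ σ = g := by
  classical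
  let : LinearOrder α := linearOrderOfSTO WellOrderingRel
  -- Both tuples sort to the same monotone tuple.
  have hsorted : f ∘ Tuple.sort f = g ∘ Tuple.sort g := by
    refine List.ofFn_injective (List.Perm.eq_of_sortedLE
      (Tuple.monotone_sort f).sortedLE_ofFn (Tuple.monotone_sort g).sortedLE_ofFn ?_)
    exact ((Tuple.sort f).ofFn_comp_perm f).trans (h.trans ((Tuple.sort g).ofFn_comp_perm g).symm)
  refine ⟨(Tuple.sort g).symm.trans (Tuple.sort f), funext fun i => ?_⟩
  simpa using congrFun hsorted ((Tuple.sort g).symm i)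

theorem Monotone.exists_le_natCard_apply_succ_eq {β : Type*} [Finite β] {g : ℕ → Set β}
    (hg : Monotone g) : ∃ t ≤ Nat.card β, g (t + 1) = g t := by
  by_contra! hne
  have hcard : ∀ t ≤ Nat.card β + 1, t ≤ (g t).ncard := by
    intro t ht
    induction t with
    | zero => exact Nat.zero_le _
    | succ t ih =>
      have hlt : g t ⊂ g (t + 1) := (hg t.le_succ).ssubset_of_ne (hne t (by omega)).symm
      exact (ih (by omega)).trans_lt (Set.ncard_lt_ncard hlt)
  have := (hcard _ le_rfl).trans (Set.ncard_le_card _)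
  omega

theorem isFixedPt_iterate_natCard_of_saturated {α β : Type*} [Finite β]
    {F : Set α → Set α} (hF : Monotone F) (f : α → β)
    (hsat : ∀ t a b, f a = f b → a ∈ F^[t] ∅ → b ∈ F^[t] ∅) :
    Function.IsFixedPt F (F^[Nat.card β] ∅) := by
  have hmono : Monotone fun t => F^[t] ∅ := hF.monotone_iterate_of_le_map (Set.empty_subset _)
  have hpre : ∀ t, f ⁻¹' (f '' F^[t] ∅) = F^[t] ∅ := fun t =>
    (Set.subset_preimage_image _ _).antisymm' fun b ⟨a, ha, hab⟩ => hsat t a b hab ha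
  obtain ⟨t, ht, hstab⟩ := Monotone.exists_le_natCard_apply_succ_eq
    (g := fun t => f '' F^[t] ∅) fun _ _ hst => Set.image_mono (hmono hst)
  have hfix : F (F^[t] ∅) = F^[t] ∅ := by
    rw [← Function.iterate_succ_apply' F, ← hpre (t + 1), ← hpre t]
    exact congrArg _ hstab
  show F (F^[Nat.card β] ∅) = F^[Nat.card β] ∅
  rw [← Nat.sub_add_cancel ht, Function.iterate_add_apply, Function.iterate_fixed hfix, hfix]

namespace CR

variable {V : Type} {k : ℕ} (adj : V → V → Prop)

/-- A configuration `(c, r)` lists the cop and robber positions with the cops to move. -/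
def copStep (S : Set ((Fin k → V) × V)) : Set ((Fin k → V) × V) :=
  {p | ∃ c : Fin k → V, (∀ i, adj (p.1 i) (c i)) ∧
    ((∃ i, c i = p.2) ∨ ∀ r, adj p.2 r → (c, r) ∈ S)}

theorem copStep_mono : Monotone (copStep (k := k) adj) :=
  fun _ _ hST _ ⟨c, hc, h⟩ => ⟨c, hc, h.imp_right fun h r hr => hST (h r hr)⟩

/-- Configurations (cops to move) from which the cops can force capture within `t` moves. -/
def winningIn (t : ℕ) : Set ((Fin k → V) × V) := (copStep adj)^[t] ∅

theorem winningIn_succ (t : ℕ) :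
    winningIn (k := k) adj (t + 1) = copStep adj (winningIn adj t) :=
  Function.iterate_succ_apply' _ _ _

theorem winningIn_mono : Monotone (winningIn (k := k) adj) :=
  (copStep_mono adj).monotone_iterate_of_le_map (Set.empty_subset _)

theorem comp_perm_mem_winningIn {t : ℕ} (σ : Equiv.Perm (Fin k)) {c : Fin k → V} {r : V}
    (h : (c, r) ∈ winningIn adj t) : (c ∘ σ, r) ∈ winningIn adj t := by
  induction t generalizing c r with
  | zero => exact h
  | succ t ih =>
    rw [winningIn_succ] at h ⊢
    obtain ⟨c', hc', h⟩ := h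
    refine ⟨c' ∘ σ, fun i => hc' (σ i), h.imp ?_ fun h r' hr' => ih (h r' hr')⟩
    exact fun ⟨i, hi⟩ => ⟨σ.symm i, by simpa using hi⟩

theorem isFixedPt_copStep_winningIn_natCard [Finite V] :
    Function.IsFixedPt (copStep adj) (winningIn (k := k) adj (Nat.card (Sym V k × V))) := by
  have : Finite (Sym V k × V) := by classical infer_instance
  -- Membership in `winningIn` only depends on the multiset of cop positions.
  refine isFixedPt_iterate_natCard_of_saturated (copStep_mono adj)
    (fun p => (Sym.ofVector ⟨List.ofFn p.1, List.length_ofFn⟩, p.2)) ?_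
  rintro t ⟨c, r⟩ ⟨d, r'⟩ hcd h
  obtain ⟨hcd, rfl⟩ := Prod.ext_iff.mp hcd
  obtain ⟨σ, rfl⟩ :=
    exists_perm_comp_eq_of_ofFn_perm (Multiset.coe_eq_coe.mp (congrArg Subtype.val hcd))
  exact comp_perm_mem_winningIn adj σ h

variable {adj}

theorem notMem_copStep {S : Set ((Fin k → V) × V)} {p : (Fin k → V) × V}
    (hp : p ∉ copStep adj S) {c : Fin k → V} (hc : ∀ i, adj (p.1 i) (c i)) :
    (∀ i, c i ≠ p.2) ∧ ∃ r, adj p.2 r ∧ (c, r) ∉ S := by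
  refine ⟨fun i hi => hp ⟨c, hc, Or.inl ⟨i, hi⟩⟩, ?_⟩
  by_contra! h
  exact hp ⟨c, hc, Or.inr h⟩

variable (adj) in
open Classical in
/-- Realising the least `t` with `(c, r) ∈ copStep adj (winningIn adj t)` makes this index drop
at every round until capture. -/
noncomputable def greedyStrat (c₀ : Fin k → V) : CopStrat V k where
  init := c₀
  move c r := if h : ∃ t, (c, r) ∈ copStep adj (winningIn adj t) then (Nat.find_spec h).choose
    else c

theorem greedyStrat_valid (hrefl : ∀ v, adj v v) (c₀ : Fin k → V) :
    (greedyStrat adj c₀).Valid adj := by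
  classical
  intro c r i
  simp only [greedyStrat]
  split_ifs with h
  · exact (Nat.find_spec h).choose_spec.1 i
  · exact hrefl _

theorem greedyStrat_move_spec (c₀ : Fin k → V) {m : ℕ} {c : Fin k → V} {r : V}
    (h : (c, r) ∈ winningIn adj (m + 1)) :
    let c' := (greedyStrat adj c₀).move c r
    (∀ i, adj (c i) (c' i)) ∧
      ((∃ i, c' i = r) ∨ ∀ r', adj r r' → (c', r') ∈ winningIn adj m) := by
  classical
  rw [winningIn_succ] at h
  have hex : ∃ t, (c, r) ∈ copStep adj (winningIn adj t) := ⟨m, h⟩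
  have hmove : (greedyStrat adj c₀).move c r = (Nat.find_spec hex).choose := by
    simp only [greedyStrat, dif_pos hex]
  obtain ⟨hadj, hnext⟩ := (Nat.find_spec hex).choose_spec
  refine ⟨hmove ▸ hadj, hmove ▸ hnext.imp_right fun hall r' hr' => ?_⟩
  exact winningIn_mono adj (Nat.find_min' hex h) (hall r' hr')

theorem exists_caughtAt_greedyStrat (c₀ : Fin k → V) {rs : RobStrat V k} (hrs : rs.Valid adj) :
    ∀ m s, play (greedyStrat adj c₀) rs s ∈ winningIn adj m →
      ∃ s' ≤ s + m, caughtAt (greedyStrat adj c₀) rs s' := by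
  intro m
  induction m with
  | zero => exact fun _ h => h.elim
  | succ m ih =>
    intro s h
    rcases (greedyStrat_move_spec c₀ h).2 with hcaught | hnext
    · exact ⟨s + 1, by omega, hcaught⟩
    · obtain ⟨s', hs', hcaught⟩ := ih (s + 1) (hnext _ (hrs _ _))
      exact ⟨s', by omega, hcaught⟩

theorem copsWinIn_of_forall_mem_winningIn (hrefl : ∀ v, adj v v) {m : ℕ} (c₀ : Fin k → V)
    (h : ∀ r, (∃ i, c₀ i = r) ∨ (c₀, r) ∈ winningIn adj m) : CopsWinIn adj k m := by
  refine ⟨greedyStrat adj c₀, greedyStrat_valid hrefl c₀, fun rs hrs => ?_⟩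
  rcases h (rs.init c₀) with hcaught | hmem
  · exact ⟨0, Nat.zero_le _, hcaught⟩
  · simpa using exists_caughtAt_greedyStrat c₀ hrs m 0 hmem

variable (adj) in
open Classical in
noncomputable def evadeStrat (X : Set ((Fin k → V) × V)) (r₀ : V) : RobStrat V k where
  init _ := r₀
  move c r := if h : ∃ r', adj r r' ∧ (c, r') ∉ X then h.choose else r

theorem evadeStrat_valid (hrefl : ∀ v, adj v v) (X : Set ((Fin k → V) × V)) (r₀ : V) :
    (evadeStrat adj X r₀).Valid adj := by
  intro c r
  simp only [evadeStrat]
  split_ifs with h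
  · exact h.choose_spec.1
  · exact hrefl r

theorem play_evadeStrat_notMem {X : Set ((Fin k → V) × V)} (hX : copStep adj X ⊆ X)
    {cs : CopStrat V k} (hcs : cs.Valid adj) {r₀ : V} (hr₀ : (cs.init, r₀) ∉ X) :
    ∀ s, play cs (evadeStrat adj X r₀) s ∉ X := by
  intro s
  induction s with
  | zero => exact hr₀
  | succ s ih =>
    obtain ⟨-, hesc⟩ := notMem_copStep (fun h => ih (hX h)) (hcs _ _)
    have hmove : (evadeStrat adj X r₀).move _ _ = hesc.choose := dif_pos hesc
    show (_, (evadeStrat adj X r₀).move _ _) ∉ X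
    rw [hmove]
    exact hesc.choose_spec.2

theorem not_caughtAt_evadeStrat {X : Set ((Fin k → V) × V)} (hX : copStep adj X ⊆ X)
    {cs : CopStrat V k} (hcs : cs.Valid adj) {r₀ : V} (hr₀ : (cs.init, r₀) ∉ X)
    (hfree : ∀ i, cs.init i ≠ r₀) : ∀ s, ¬ caughtAt cs (evadeStrat adj X r₀) s
  | 0, ⟨i, hi⟩ => hfree i hi
  | s + 1, ⟨i, hi⟩ =>
    (notMem_copStep (fun h => play_evadeStrat_notMem hX hcs hr₀ s (hX h)) (hcs _ _)).1 i hi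

theorem caught_or_mem_of_copStep_subset (hrefl : ∀ v, adj v v) {X : Set ((Fin k → V) × V)}
    (hX : copStep adj X ⊆ X) {cs : CopStrat V k} (hcs : cs.Valid adj)
    (hwin : ∀ rs : RobStrat V k, rs.Valid adj → ∃ s, caughtAt cs rs s) (r₀ : V) :
    (∃ i, cs.init i = r₀) ∨ (cs.init, r₀) ∈ X := by
  by_contra! h
  obtain ⟨s, hs⟩ := hwin _ (evadeStrat_valid hrefl X r₀)
  exact not_caughtAt_evadeStrat hX hcs h.2 h.1 s hs

theorem copsWinIn_natCard_sym_prod [Finite V] (hrefl : ∀ v, adj v v) {t : ℕ}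
    (h : CopsWinIn adj k t) : CopsWinIn adj k (Nat.card (Sym V k × V)) := by
  obtain ⟨cs, hcs, hwin⟩ := h
  refine copsWinIn_of_forall_mem_winningIn hrefl cs.init fun r₀ => ?_
  exact caught_or_mem_of_copStep_subset hrefl (isFixedPt_copStep_winningIn_natCard adj).le hcs
    (fun rs hrs => (hwin rs hrs).imp fun _ => And.right) r₀

end CR

theorem captTime_le_card_configurations_general {V : Type} [Fintype V]
    (G : SimpleGraph V) (k : ℕ)
    (hk : copNumber (fun u v : V => u = v ∨ G.Adj u v) = k) :
    captTime (fun u v : V => u = v ∨ G.Adj u v) ≤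
      Fintype.card V * (Fintype.card V + k - 1).choose k := by
  classical
  have hcard : Nat.card (Sym V k × V) = Fintype.card V * (Fintype.card V + k - 1).choose k := by
    rw [Nat.card_eq_fintype_card, Fintype.card_prod, Sym.card_sym_eq_choose, mul_comm]
  rw [captTime, hk]
  rcases Set.eq_empty_or_nonempty {t | CopsWinIn (fun u v : V => u = v ∨ G.Adj u v) k t}
    with hnone | ⟨t, ht⟩
  · rw [hnone, Nat.sInf_empty]
    exact Nat.zero_le _
  · exact hcard ▸ Nat.sInf_le (CR.copsWinIn_natCard_sym_prod (fun _ => Or.inl rfl) ht)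

/-- If `G` is an `n`-vertex (reflexive) graph with cop number `k`, then the capture time of
`G` is at most `n · C(n+k-1, k)`, the number of configurations. -/
theorem captTime_le_card_configurations {V : Type} [Fintype V] [Nonempty V]
    (G : SimpleGraph V) (k : ℕ)
    (hk : copNumber (fun u v : V => u = v ∨ G.Adj u v) = k) :
    captTime (fun u v : V => u = v ∨ G.Adj u v) ≤
      Fintype.card V * (Fintype.card V + k - 1).choose k :=
  captTime_le_card_configurations_general G k hk
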